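/- Let (X,G) be a complete G-metric space and let T : X → X satisfy G(Tx,Ty,Tz) ≤ a·G(x,y,z) + b·G(x,x,Tx) + c·G(y,y,Ty) + d·G(z,z,Tz) for all x,y,z ∈ X, where a,b,c,d are nonnegative real numbers with a + b + c + d < 1. Then T has a unique fixed point u ∈ X (Tu = u), and T is G-continuous at u. -/

import Mathlib

open Filter Topology

/-- A G-metric on a set `X` (Mustafa–Sims). The symmetry axiom (G5) is recorded via
the two generating permutations (swap of last two arguments and a cyclic shift),
from which all six equalities of (G5) follow. -/
structure GMetricStruct (X : Type*) where
  G : X → X → X → ℝ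
  nonneg : ∀ x y z, 0 ≤ G x y z
  eq_zero_of_eq : ∀ x y z, x = y → y = z → G x y z = 0
  pos_of_ne : ∀ x y, x ≠ y → 0 < G x x y
  le_of_ne : ∀ x y z, z ≠ y → G x x y ≤ G x y z
  symm_swap : ∀ x y z, G x y z = G x z y
  symm_cycle : ∀ x y z, G x y z = G y z x
  rect : ∀ x y z a, G x y z ≤ G x a a + G a y z

/-- A convex structure `W` on a G-metric space `(X, G)`:
for all `x, y, u, v` and `λ, β ∈ [0,1]` with `λ + β = 1`,
`G(W(x,y;λ,β), u, v) ≤ λ·G(x,u,v) + β·G(y,u,v)`. -/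
def IsConvexStructure {X : Type*} (GM : GMetricStruct X) (W : X → X → ℝ → ℝ → X) : Prop :=
  ∀ x y u v : X, ∀ lam beta : ℝ, lam ∈ Set.Icc (0:ℝ) 1 → beta ∈ Set.Icc (0:ℝ) 1 →
    lam + beta = 1 →
    GM.G (W x y lam beta) u v ≤ lam * GM.G x u v + beta * GM.G y u v

/-- A sequence `x` G-converges to `l` iff `G(x_n, x_n, l) → 0`. -/
def GConvergesTo {X : Type*} (GM : GMetricStruct X) (x : ℕ → X) (l : X) : Prop :=
  Tendsto (fun n => GM.G (x n) (x n) l) atTop (𝓝 0)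

/-- A sequence `x` is G-Cauchy iff `G(x_n, x_m, x_l) → 0` as `n, m, l → ∞`. -/
def GCauchySeq {X : Type*} (GM : GMetricStruct X) (x : ℕ → X) : Prop :=
  ∀ ε : ℝ, 0 < ε → ∃ N : ℕ, ∀ n ≥ N, ∀ m ≥ N, ∀ l ≥ N, GM.G (x n) (x m) (x l) < ε

/-- A G-metric space is complete iff every G-Cauchy sequence G-converges. -/
def GComplete {X : Type*} (GM : GMetricStruct X) : Prop :=
  ∀ x : ℕ → X, GCauchySeq GM x → ∃ l : X, GConvergesTo GM x l

/-- `T` is G-continuous at `u` iff it maps sequences G-converging to `u`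
to sequences G-converging to `T u`. -/
def GContinuousAt {X : Type*} (GM : GMetricStruct X) (T : X → X) (u : X) : Prop :=
  ∀ y : ℕ → X, GConvergesTo GM y u → GConvergesTo GM (fun n => T (y n)) (T u)

/-!
Writing `x n = T^[n] x₀`, the contraction inequality at `(x n, x n, x (n+1))` gives
`G(x (n+1), x (n+1), x (n+2)) ≤ k · G(x n, x n, x (n+1))` with `k = (a+b+c)/(1-d) < 1`, so the
orbit is G-Cauchy and converges to some `u`. Applying the inequality at `(x n, x n, u)` and
letting `n → ∞` gives `(1-d) · G(u, u, T u) ≤ 0`, so `T u = u`. Uniqueness comes from the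
inequality at `(u, u, v)`, and continuity at `u` from the inequality at `(y n, y n, u)`, after
bounding `G(y n, y n, T (y n))` through the inequality at `(y n, u, u)`.
-/

open Filter Topology Finset Function

namespace GMetricStruct

variable {X : Type*} (GM : GMetricStruct X)

theorem G_self (x : X) : GM.G x x x = 0 :=
  GM.eq_zero_of_eq x x x rfl rfl

theorem G_pair_comm (x y : X) : GM.G x x y = GM.G y x x := by
  rw [GM.symm_cycle, GM.symm_cycle]

theorem G_le_two_mul (x y : X) : GM.G x y y ≤ 2 * GM.G x x y := by
  have h₁ : GM.G x y y = GM.G y y x := GM.symm_cycle x y y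
  have h₂ := GM.rect y y x x
  have h₃ : GM.G y x x = GM.G x x y := GM.symm_cycle y x x
  have h₄ : GM.G x y x = GM.G x x y := GM.symm_swap x y x
  linarith

theorem G_le_add_add (x y z a : X) : GM.G x y z ≤ GM.G x a a + GM.G y a a + GM.G z a a := by
  have h₁ := GM.rect x y z a
  have h₂ := GM.rect y z a a
  have h₃ : GM.G a y z = GM.G y z a := GM.symm_cycle a y z
  have h₄ : GM.G a z a = GM.G z a a := by rw [GM.symm_swap, ← GM.G_pair_comm]
  linarith

theorem eq_of_G_nonpos {x y : X} (h : GM.G x x y ≤ 0) : x = y := by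
  by_contra hxy
  exact (GM.pos_of_ne x y hxy).not_ge h

theorem G_le_sum_Ico (x : ℕ → X) {n m : ℕ} (hnm : n ≤ m) :
    GM.G (x m) (x n) (x n) ≤ ∑ i ∈ Ico n m, GM.G (x i) (x i) (x (i + 1)) := by
  induction m, hnm using Nat.le_induction with
  | base => simp [G_self]
  | succ m hnm ih =>
    rw [sum_Ico_succ_top hnm, GM.G_pair_comm (x m)]
    linarith [GM.rect (x (m + 1)) (x n) (x n) (x m)]

theorem gCauchySeq_of_le_geometric (x : ℕ → X) {C k : ℝ} (hk₀ : 0 ≤ k) (hk₁ : k < 1)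
    (h : ∀ n, GM.G (x n) (x n) (x (n + 1)) ≤ C * k ^ n) : GCauchySeq GM x := by
  have hC : 0 ≤ C := by simpa using (GM.nonneg _ _ _).trans (h 0)
  have hbound : ∀ n m, n ≤ m → GM.G (x m) (x n) (x n) ≤ C * k ^ n / (1 - k) := by
    intro n m hnm
    calc GM.G (x m) (x n) (x n)
        ≤ ∑ i ∈ Ico n m, GM.G (x i) (x i) (x (i + 1)) := GM.G_le_sum_Ico x hnm
      _ ≤ ∑ i ∈ Ico n m, C * k ^ i := sum_le_sum fun i _ => h i
      _ = C * ∑ i ∈ Ico n m, k ^ i := (mul_sum _ _ _).symm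
      _ ≤ C * (k ^ n / (1 - k)) := by gcongr; exact geom_sum_Ico_le_of_lt_one hk₀ hk₁
      _ = C * k ^ n / (1 - k) := (mul_div_assoc _ _ _).symm
  have hlim : Tendsto (fun n => C * k ^ n / (1 - k)) atTop (𝓝 0) := by
    simpa using ((tendsto_pow_atTop_nhds_zero_of_lt_one hk₀ hk₁).const_mul C).div_const (1 - k)
  intro ε hε
  obtain ⟨N, hN⟩ := (hlim.eventually (gt_mem_nhds (by positivity : 0 < ε / 3))).exists
  refine ⟨N, fun n hn m hm l hl => ?_⟩
  linarith [GM.G_le_add_add (x n) (x m) (x l) (x N), hbound N n hn, hbound N m hm,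
    hbound N l hl]

theorem tendsto_G_succ_of_gConvergesTo {x : ℕ → X} {u : X} (hx : GConvergesTo GM x u) :
    Tendsto (fun n => GM.G (x n) (x n) (x (n + 1))) atTop (𝓝 0) := by
  have hbound : ∀ n, GM.G (x n) (x n) (x (n + 1))
      ≤ 2 * GM.G (x (n + 1)) (x (n + 1)) u + GM.G (x n) (x n) u := by
    intro n
    rw [GM.G_pair_comm]
    linarith [GM.rect (x (n + 1)) (x n) (x n) u, GM.G_le_two_mul (x (n + 1)) u,
      GM.G_pair_comm (x n) u]
  refine squeeze_zero (fun n => GM.nonneg _ _ _) hbound ?_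
  simpa using ((hx.comp (tendsto_add_atTop_nat 1)).const_mul 2).add hx

end GMetricStruct

def FourTermContraction {X : Type*} (GM : GMetricStruct X) (T : X → X) (a b c d : ℝ) : Prop :=
  ∀ x y z : X, GM.G (T x) (T y) (T z) ≤
    a * GM.G x y z + b * GM.G x x (T x) + c * GM.G y y (T y) + d * GM.G z z (T z)

namespace FourTermContraction

variable {X : Type*} {GM : GMetricStruct X} {T : X → X} {a b c d : ℝ}
  (hT : FourTermContraction GM T a b c d)
include hT

theorem G_iterate_succ_le (x₀ : X) (n : ℕ) :
    (1 - d) * GM.G (T^[n + 1] x₀) (T^[n + 1] x₀) (T^[n + 2] x₀)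
      ≤ (a + b + c) * GM.G (T^[n] x₀) (T^[n] x₀) (T^[n + 1] x₀) := by
  have h := hT (T^[n] x₀) (T^[n] x₀) (T^[n + 1] x₀)
  simp only [← iterate_succ_apply' T] at h
  linarith

theorem gCauchySeq_iterate (habc : 0 ≤ a + b + c) (habcd : a + b + c + d < 1) (x₀ : X) :
    GCauchySeq GM fun n => T^[n] x₀ := by
  have hd : 0 < 1 - d := by linarith
  set k := (a + b + c) / (1 - d)
  have hk₀ : 0 ≤ k := div_nonneg habc hd.le
  have hk₁ : k < 1 := (div_lt_one hd).2 (by linarith)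
  have hstep : ∀ n, GM.G (T^[n + 1] x₀) (T^[n + 1] x₀) (T^[n + 2] x₀)
      ≤ k * GM.G (T^[n] x₀) (T^[n] x₀) (T^[n + 1] x₀) := by
    intro n
    rw [div_mul_eq_mul_div, le_div_iff₀ hd, mul_comm]
    exact hT.G_iterate_succ_le x₀ n
  refine GM.gCauchySeq_of_le_geometric _ (C := GM.G x₀ x₀ (T x₀)) hk₀ hk₁ fun n => ?_
  rw [mul_comm]
  exact le_geom (u := fun n => GM.G (T^[n] x₀) (T^[n] x₀) (T^[n + 1] x₀)) hk₀ n
    fun m _ => hstep m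

theorem isFixedPt_of_gConvergesTo_iterate (hd : d < 1) {x₀ u : X}
    (hu : GConvergesTo GM (fun n => T^[n] x₀) u) : IsFixedPt T u := by
  set x : ℕ → X := fun n => T^[n] x₀
  have hbound : ∀ n, (1 - d) * GM.G u u (T u) ≤ a * GM.G (x n) (x n) u
      + (b + c) * GM.G (x n) (x n) (x (n + 1)) + 2 * GM.G (x (n + 1)) (x (n + 1)) u := by
    intro n
    have hx : x (n + 1) = T (x n) := iterate_succ_apply' T n x₀
    have h := hT (x n) (x n) u
    rw [← hx] at h
    linarith [GM.rect (T u) u u (x (n + 1)), GM.G_pair_comm u (T u),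
      GM.G_pair_comm (x (n + 1)) (T u), GM.G_le_two_mul (x (n + 1)) u]
  have hlim : Tendsto (fun n => a * GM.G (x n) (x n) u
      + (b + c) * GM.G (x n) (x n) (x (n + 1)) + 2 * GM.G (x (n + 1)) (x (n + 1)) u)
      atTop (𝓝 0) := by
    simpa using ((hu.const_mul a).add
      ((GM.tendsto_G_succ_of_gConvergesTo hu).const_mul (b + c))).add
      ((hu.comp (tendsto_add_atTop_nat 1)).const_mul 2)
  have hle : (1 - d) * GM.G u u (T u) ≤ 0 := ge_of_tendsto hlim (.of_forall hbound)
  exact (GM.eq_of_G_nonpos (nonpos_of_mul_nonpos_right hle (by linarith))).symm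

theorem eq_of_isFixedPt (ha : a < 1) {u v : X} (hu : IsFixedPt T u) (hv : IsFixedPt T v) :
    v = u := by
  have h := hT u u v
  rw [hu, hv, GM.G_self, GM.G_self] at h
  have hle : (1 - a) * GM.G u u v ≤ 0 := by linarith
  exact (GM.eq_of_G_nonpos (nonpos_of_mul_nonpos_right hle (by linarith))).symm

theorem gContinuousAt_of_isFixedPt (hb : b < 1) {u : X} (hu : IsFixedPt T u) :
    GContinuousAt GM T u := by
  intro y hy
  set p := fun n => GM.G (y n) (y n) u
  set t := fun n => GM.G (y n) (y n) (T (y n))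
  have hq : Tendsto (fun n => GM.G (y n) u u) atTop (𝓝 0) :=
    squeeze_zero (fun n => GM.nonneg _ _ _) (fun n => GM.G_le_two_mul (y n) u)
      (by simpa using hy.const_mul 2)
  have ht : ∀ n, t n ≤ (a * GM.G (y n) u u + p n) / (1 - b) := by
    intro n
    have h := hT (y n) u u
    rw [hu, GM.G_self] at h
    rw [le_div_iff₀ (by linarith)]
    linarith [GM.rect (T (y n)) (y n) (y n) u, GM.G_pair_comm (y n) (T (y n)),
      GM.G_pair_comm (y n) u]
  have htlim : Tendsto t atTop (𝓝 0) :=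
    squeeze_zero (fun n => GM.nonneg _ _ _) ht
      (by simpa using ((hq.const_mul a).add hy).div_const (1 - b))
  have hs : ∀ n, GM.G (T (y n)) (T (y n)) (T u) ≤ a * p n + (b + c) * t n := by
    intro n
    have h := hT (y n) (y n) u
    rw [hu, GM.G_self] at h
    rw [hu]
    simp only [p, t]
    linarith
  exact squeeze_zero (fun n => GM.nonneg _ _ _) hs
    (by simpa using (hy.const_mul a).add (htlim.const_mul (b + c)))

end FourTermContraction

theorem fixed_point_four_term' {X : Type*} [Nonempty X] (GM : GMetricStruct X)
    (hcomp : GComplete GM) (T : X → X)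
    (a b c d : ℝ) (ha : 0 ≤ a) (hb : 0 ≤ b) (hc : 0 ≤ c) (hd : 0 ≤ d)
    (habcd : a + b + c + d < 1)
    (hT : ∀ x y z : X, GM.G (T x) (T y) (T z) ≤
      a * GM.G x y z + b * GM.G x x (T x) + c * GM.G y y (T y)
        + d * GM.G z z (T z)) :
    ∃ u : X, T u = u ∧ (∀ v : X, T v = v → v = u) ∧ GContinuousAt GM T u := by
  have hT : FourTermContraction GM T a b c d := hT
  obtain ⟨x₀⟩ := ‹Nonempty X›
  obtain ⟨u, hu⟩ := hcomp _ (hT.gCauchySeq_iterate (by linarith) habcd x₀)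
  have hfix : IsFixedPt T u := hT.isFixedPt_of_gConvergesTo_iterate (by linarith) hu
  exact ⟨u, hfix, fun v hv => hT.eq_of_isFixedPt (by linarith) hfix hv,
    hT.gContinuousAt_of_isFixedPt (by linarith) hfix⟩
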